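/- Let n ≥ 3 be odd and x, y : Fin n → Bool. Then the graph M_{x,y} has a perfect matching if and only if |x ∧ y| is odd. -/

import Mathlib

/-!
Call `i` a crossing if `x i = y i = true`. At a non-crossing the two rails continue along the edges
`t_i t_{i+1}` and `b_i b_{i+1}`; at a crossing they continue along the paths
`t_i k_i^t ℓ_i^b b_{i+1}` and `b_i k_i^b ℓ_i^t t_{i+1}`, so the rails swap there.

If the number of crossings is even, a labelling `σ` of the indices that flips exactly at the
crossings is consistent around the cycle, and it splits the vertices into two sides with no edge
between them. Each side holds three of the six vertices of every index, hence `3n` vertices in all,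
an odd number, so there is no perfect matching.

If it is odd, the rails close up into one cycle of even length, which is matched alternately (the
remaining edges `k ℓ` are matched as they stand). A labelling `π` that flips exactly at the
non-crossings, consistent since `n` minus the number of crossings is even, says whether `t_i` is
matched towards index `i + 1` or towards `i - 1`.
-/

/-- Cyclic successor on `Fin n`. -/
def cycSucc {n : ℕ} (i : Fin n) : Fin n := ⟨(i.val + 1) % n, Nat.mod_lt _ i.pos⟩

/-- The graph `M_{x,y}` on the `6n` vertices `Fin n × Fin 6`, where for `i : Fin n` the
vertex `(i, 0)` is `t_i`, `(i, 1)` is `b_i`, `(i, 2)` is `k_i^t`, `(i, 3)` is `k_i^b`,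
`(i, 4)` is `ℓ_i^t`, and `(i, 5)` is `ℓ_i^b`.  For each `i` (indices mod `n`) the edges are:
`{k_i^t, ℓ_i^b}` and `{k_i^b, ℓ_i^t}` always; `{t_i, t_{i+1}}` and `{b_i, b_{i+1}}` if
`x i = false` or `y i = false`; `{t_i, k_i^t}` and `{b_i, k_i^b}` if `x i = true`;
`{t_{i+1}, ℓ_i^t}` and `{b_{i+1}, ℓ_i^b}` if `y i = true`. -/
def Mxy (n : ℕ) (x y : Fin n → Bool) : SimpleGraph (Fin n × Fin 6) :=
  SimpleGraph.fromEdgeSet { e | ∃ i : Fin n,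
    e = s((i, 2), (i, 5)) ∨ e = s((i, 3), (i, 4)) ∨
    ((x i = false ∨ y i = false) ∧
      (e = s((i, 0), (cycSucc i, 0)) ∨ e = s((i, 1), (cycSucc i, 1)))) ∨
    (x i = true ∧ (e = s((i, 0), (i, 2)) ∨ e = s((i, 1), (i, 3)))) ∨
    (y i = true ∧ (e = s((cycSucc i, 0), (i, 4)) ∨ e = s((cycSucc i, 1), (i, 5)))) }

open Finset

theorem Fin.exists_forall_add_one_eq_add_of_sum_eq_zero {G : Type*} [AddCommGroup G] {n : ℕ}
    [NeZero n] (f : Fin n → G) (h : ∑ i, f i = 0) :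
    ∃ σ : Fin n → G, ∀ i, σ (i + 1) = σ i + f i := by
  obtain ⟨m, rfl⟩ := Nat.exists_eq_add_one_of_ne_zero (NeZero.ne n)
  refine ⟨fun i => partialSum f i.castSucc, fun i => ?_⟩
  dsimp only
  cases i using Fin.lastCases with
  | last =>
    rw [Fin.last_add_one, ← partialSum_succ, Fin.succ_last, Fin.castSucc_zero, partialSum_zero,
      partialSum, Fin.val_last, List.take_of_length_le (by simp), List.sum_ofFn, h]
  | cast j => rw [Fin.coeSucc_eq_succ, ← partialSum_succ]; rfl

theorem Fin.exists_forall_add_one_eq_xor_of_even_card {n : ℕ} [NeZero n] (f : Fin n → Bool)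
    (h : Even #{i | f i}) : ∃ σ : Fin n → Bool, ∀ i, σ (i + 1) = (σ i ^^ f i) := by
  obtain ⟨τ, hτ⟩ := exists_forall_add_one_eq_add_of_sum_eq_zero
    (fun i => if f i then (1 : ZMod 2) else 0)
    (by rw [sum_boole]; exact ZMod.natCast_eq_zero_iff_even.2 h)
  refine ⟨fun i => decide (τ i = 1), fun i => ?_⟩
  simp only [hτ]
  generalize τ i = a
  cases f i <;> fin_cases a <;> rfl

theorem Fin.add_one_ne_self {n : ℕ} [NeZero n] (hn : 2 ≤ n) (i : Fin n) : i + 1 ≠ i :=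
  add_ne_left.2 (Fin.ne_of_val_ne (by simp [Nat.mod_eq_of_lt (show 1 < n by omega)]))

theorem Sym2.apply_eq_apply_of_eq_mk {α β : Type*} {f : α → β} {a b u v : α}
    (h : s(u, v) = s(a, b)) (hab : f a = f b) : f u = f v := by
  rcases Sym2.eq_iff.1 h with ⟨rfl, rfl⟩ | ⟨rfl, rfl⟩
  exacts [hab, hab.symm]

namespace SimpleGraph

variable {V : Type*} {G : SimpleGraph V}

theorem exists_isPerfectMatching_of_involutive {f : V → V} (hf : Function.Involutive f)
    (hadj : ∀ v, G.Adj v (f v)) : ∃ M : G.Subgraph, M.IsPerfectMatching := by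
  refine ⟨⟨Set.univ, fun v w => f v = w, ?_, fun _ => trivial, ?_⟩, ?_⟩
  · rintro v _ rfl
    exact hadj v
  · exact ⟨fun v w h => by rw [← h, hf]⟩
  · rw [Subgraph.isPerfectMatching_iff]
    exact fun v => ⟨f v, rfl, fun _ h => Eq.symm h⟩

theorem Subgraph.IsPerfectMatching.even_card_of_adj_mem {M : G.Subgraph}
    (hM : M.IsPerfectMatching) (s : Finset V) (hs : ∀ ⦃u v⦄, G.Adj u v → u ∈ s → v ∈ s) :
    Even #s := by
  classical
  have hmatch : (M.induce s).IsMatching := by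
    intro v hv
    obtain ⟨w, hw, huniq⟩ := hM.1 (hM.2 v)
    exact ⟨w, ⟨hv, hs (M.adj_sub hw) hv, hw⟩, fun u hu => huniq u hu.2.2⟩
  have : Fintype (M.induce s).verts := inferInstanceAs (Fintype (s : Set V))
  simpa using hmatch.even_card

end SimpleGraph

theorem cycSucc_eq_add_one {n : ℕ} [NeZero n] (i : Fin n) : cycSucc i = i + 1 := by
  ext
  simp [cycSucc, Fin.val_add]

namespace Mxy

variable {n : ℕ} {x y : Fin n → Bool}

section Adj

variable (i : Fin n)

theorem adj_kt_lb : (Mxy n x y).Adj (i, 2) (i, 5) := ⟨⟨i, by simp⟩, by simp⟩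

theorem adj_kb_lt : (Mxy n x y).Adj (i, 3) (i, 4) := ⟨⟨i, by simp⟩, by simp⟩

theorem adj_t_kt (h : x i = true) : (Mxy n x y).Adj (i, 0) (i, 2) := ⟨⟨i, by simp [h]⟩, by simp⟩

theorem adj_b_kb (h : x i = true) : (Mxy n x y).Adj (i, 1) (i, 3) := ⟨⟨i, by simp [h]⟩, by simp⟩

variable [NeZero n]

theorem adj_t_succ (hn : 2 ≤ n) (h : x i = false ∨ y i = false) :
    (Mxy n x y).Adj (i, 0) (i + 1, 0) :=
  ⟨⟨i, by simp [h, cycSucc_eq_add_one]⟩, by simpa using (Fin.add_one_ne_self hn i).symm⟩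

theorem adj_b_succ (hn : 2 ≤ n) (h : x i = false ∨ y i = false) :
    (Mxy n x y).Adj (i, 1) (i + 1, 1) :=
  ⟨⟨i, by simp [h, cycSucc_eq_add_one]⟩, by simpa using (Fin.add_one_ne_self hn i).symm⟩

theorem adj_lt_succ (h : y i = true) : (Mxy n x y).Adj (i, 4) (i + 1, 0) :=
  ⟨⟨i, by simp [h, cycSucc_eq_add_one]⟩, by simp⟩

theorem adj_lb_succ (h : y i = true) : (Mxy n x y).Adj (i, 5) (i + 1, 1) :=
  ⟨⟨i, by simp [h, cycSucc_eq_add_one]⟩, by simp⟩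

end Adj

/-- `σ i` is the side of `t_i`. The pair `k_i^t ℓ_i^b` goes with `t_i` if `x i`, and otherwise
with `b_{i+1}`; likewise `k_i^b ℓ_i^t` goes with `b_i` or with `t_{i+1}`. -/
def side (σ x : Fin n → Bool) (v : Fin n × Fin 6) : Bool :=
  ![σ v.1, !σ v.1, σ v.1 ^^ !x v.1, σ v.1 ^^ x v.1, σ v.1 ^^ x v.1, σ v.1 ^^ !x v.1] v.2

theorem side_eq_of_adj [NeZero n] {σ : Fin n → Bool}
    (hσ : ∀ i, σ (i + 1) = (σ i ^^ (x i && y i))) {u v : Fin n × Fin 6}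
    (h : (Mxy n x y).Adj u v) : side σ x u = side σ x v := by
  obtain ⟨⟨i, he⟩, -⟩ := h
  simp only [cycSucc_eq_add_one] at he
  rcases he with he | he | ⟨hxy, he | he⟩ | ⟨hx, he | he⟩ | ⟨hy, he | he⟩ <;>
    refine Sym2.apply_eq_apply_of_eq_mk he ?_ <;> cases hxi : x i <;> simp_all [side]

theorem card_side (σ x : Fin n → Bool) : #{v | side σ x v} = 3 * n := by
  calc #{v | side σ x v} = ∑ _ : Fin n, 3 := by
        rw [card_filter, Fintype.sum_prod_type]
        refine sum_congr rfl fun i _ => ?_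
        simp only [Fin.sum_univ_six, side, Matrix.cons_val]
        rcases Bool.eq_false_or_eq_true (σ i) with hσ | hσ <;>
          rcases Bool.eq_false_or_eq_true (x i) with hx | hx <;> simp [hσ, hx]
    _ = 3 * n := by simp [mul_comm]

theorem odd_card_of_isPerfectMatching (hodd : Odd n) {M : (Mxy n x y).Subgraph}
    (hM : M.IsPerfectMatching) : Odd #{i | x i = true ∧ y i = true} := by
  have : NeZero n := ⟨hodd.pos.ne'⟩
  by_contra hc
  obtain ⟨σ, hσ⟩ := Fin.exists_forall_add_one_eq_xor_of_even_card (fun i => x i && y i)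
    (by simpa [Bool.and_eq_true] using Nat.not_odd_iff_even.1 hc)
  have heven := hM.even_card_of_adj_mem {v | side σ x v}
    fun u v huv hu => by simpa [← side_eq_of_adj hσ huv] using hu
  rw [card_side] at heven
  exact Nat.not_even_iff_odd.2 ((by decide : Odd 3).mul hodd) heven

/-- `π i` says whether `t_i` is matched towards index `i + 1`; then `b_i` is matched towards
`i - 1`, and the other way round if not. -/
def partner [NeZero n] (π c : Fin n → Bool) (v : Fin n × Fin 6) : Fin n × Fin 6 :=
  let i := v.1
  ![if π i then (if c i then (i, 2) else (i + 1, 0))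
      else (if c (i - 1) then (i - 1, 4) else (i - 1, 0)),
    if π i then (if c (i - 1) then (i - 1, 5) else (i - 1, 1))
      else (if c i then (i, 3) else (i + 1, 1)),
    if c i && π i then (i, 0) else (i, 5),
    if c i && !π i then (i, 1) else (i, 4),
    if c i && !π i then (i + 1, 0) else (i, 3),
    if c i && π i then (i + 1, 1) else (i, 2)] v.2

theorem partner_involutive [NeZero n] {π c : Fin n → Bool}
    (hπ : ∀ i, π (i + 1) = (π i ^^ !c i)) : Function.Involutive (partner π c) := by
  rintro ⟨i, s⟩
  have h₁ := hπ i
  have h₂ := hπ (i - 1)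
  rw [sub_add_cancel] at h₂
  fin_cases s <;> cases hci : c i <;> cases hcj : c (i - 1) <;> cases hπi : π i <;>
    simp_all [partner]

theorem adj_partner [NeZero n] (hn : 2 ≤ n) (π : Fin n → Bool) (v : Fin n × Fin 6) :
    (Mxy n x y).Adj v (partner π (fun i => x i && y i) v) := by
  obtain ⟨i, s⟩ := v
  obtain ⟨j, rfl⟩ : ∃ j, i = j + 1 := ⟨i - 1, (sub_add_cancel i 1).symm⟩
  fin_cases s <;>
    simp only [partner, add_sub_cancel_right, Fin.reduceFinMk, Fin.zero_eta, Fin.mk_one,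
      Matrix.cons_val] <;>
    split_ifs <;> simp only [Bool.and_eq_true] at *
  all_goals first
    | exact adj_kt_lb _ | exact (adj_kt_lb _).symm
    | exact adj_kb_lt _ | exact (adj_kb_lt _).symm
    | exact adj_t_kt _ (by simp_all) | exact (adj_t_kt _ (by simp_all)).symm
    | exact adj_b_kb _ (by simp_all) | exact (adj_b_kb _ (by simp_all)).symm
    | exact adj_lt_succ _ (by simp_all) | exact (adj_lt_succ _ (by simp_all)).symm
    | exact adj_lb_succ _ (by simp_all) | exact (adj_lb_succ _ (by simp_all)).symm
    | exact adj_t_succ _ hn (by simp_all [or_iff_not_imp_left])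
    | exact (adj_t_succ _ hn (by simp_all [or_iff_not_imp_left])).symm
    | exact adj_b_succ _ hn (by simp_all [or_iff_not_imp_left])
    | exact (adj_b_succ _ hn (by simp_all [or_iff_not_imp_left])).symm

theorem exists_isPerfectMatching (hn : 2 ≤ n) (hodd : Odd n)
    (hc : Odd #{i | x i = true ∧ y i = true}) :
    ∃ M : (Mxy n x y).Subgraph, M.IsPerfectMatching := by
  have : NeZero n := ⟨by omega⟩
  have hsplit := card_filter_add_card_filter_not (s := univ)
    (fun i : Fin n => x i = true ∧ y i = true)
  rw [card_univ, Fintype.card_fin] at hsplit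
  have hflip : Even #{i | (!(x i && y i)) = true} := by
    have := (Nat.odd_add.1 (hsplit ▸ hodd)).1 hc
    simpa [Bool.and_eq_true, or_iff_not_imp_left] using this
  obtain ⟨π, hπ⟩ := Fin.exists_forall_add_one_eq_xor_of_even_card _ hflip
  exact SimpleGraph.exists_isPerfectMatching_of_involutive (partner_involutive hπ)
    (adj_partner hn π)

end Mxy

theorem Mxy_perfectMatching_iff_odd (n : ℕ) (hn : 3 ≤ n) (hodd : Odd n)
    (x y : Fin n → Bool) :
    (∃ M : (Mxy n x y).Subgraph, M.IsPerfectMatching) ↔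
      Odd (Finset.univ.filter fun i => x i = true ∧ y i = true).card :=
  ⟨fun ⟨_, hM⟩ => Mxy.odd_card_of_isPerfectMatching hodd hM,
    Mxy.exists_isPerfectMatching (by omega) hodd⟩
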